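/- arXiv:math/0608678 — 7 statements merged into one kernel-verified Lean document; each statement's English description precedes it below -/
import Mathlib

section
/- A word u of length at least 2 over a totally ordered alphabet is a Lyndon word if and only if there exist Lyndon words v and w with v < w and u = vw. -/
section LyndonAux

variable {α : Type*} [LinearOrder α]

lemma lt_append_of_ne_nil' (s : List α) {l : List α} (h : l ≠ []) : s < s ++ l := by
  induction s with
  | nil => cases l with | nil => exact absurd rfl h | cons a t => exact List.Lex.nil
  | cons a s ih => exact List.Lex.cons ih

lemma lt_of_prefix_ne' {a b : List α} (h : a <+: b) (hne : a ≠ b) : a < b := by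
  obtain ⟨t, rfl⟩ := h
  have ht : t ≠ [] := by rintro rfl; simp at hne
  exact lt_append_of_ne_nil' a ht

lemma append_lt_append_left_iff' (s : List α) {a b : List α} : s ++ a < s ++ b ↔ a < b := by
  induction s with
  | nil => rfl
  | cons x s ih =>
    constructor
    · intro h
      exact ih.mp ((List.lex_cons_iff).mp h)
    · intro h
      exact List.Lex.cons (ih.mpr h)

lemma lt_append_of_lt_not_prefix' {a b : List α} (h : a < b) (hp : ¬ a <+: b) :
    ∀ s t : List α, a ++ s < b ++ t := by
  have h' : List.Lex (· < ·) a b := h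
  clear h
  induction h' with
  | nil => exact absurd (List.nil_prefix) hp
  | @cons x l₁ l₂ hl ih =>
    intro s t
    exact List.Lex.cons (ih (by simpa using hp) s t)
  | @rel x l₁ y l₂ hxy =>
    intro s t
    exact List.Lex.rel hxy

end LyndonAux

/-- A nonempty word `u` over a totally ordered alphabet is a Lyndon word if for every
factorization `u = u₁ ++ u₂` into nonempty words one has `u < u₂` lexicographically. -/
def IsLyndon {α : Type*} [LinearOrder α] (u : List α) : Prop :=
  u ≠ [] ∧ ∀ u₁ u₂ : List α, u₁ ≠ [] → u₂ ≠ [] → u = u₁ ++ u₂ → u < u₂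

section LyndonAux2

variable {α : Type*} [LinearOrder α]

/-- Key lemma: the concatenation of Lyndon words `v < w` is Lyndon. -/
lemma isLyndon_append' {v w : List α} (hv : IsLyndon v) (hw : IsLyndon w)
    (hvw : v < w) : IsLyndon (v ++ w) := by
  obtain ⟨hvne, hvL⟩ := hv
  obtain ⟨hwne, hwL⟩ := hw
  have key : v ++ w < w := by
    by_cases hp : v <+: w
    · obtain ⟨z, hz⟩ := hp
      have hzne : z ≠ [] := by
        rintro rfl; rw [List.append_nil] at hz; exact absurd hz hvw.ne
      have : w < z := hwL v z hvne hzne hz.symm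
      calc v ++ w < v ++ z := (append_lt_append_left_iff' v).mpr this
        _ = w := hz
    · simpa using lt_append_of_lt_not_prefix' hvw hp w []
  refine ⟨by simp [hvne], ?_⟩
  intro u₁ u₂ h1 h2 heq
  rcases List.append_eq_append_iff.mp heq.symm with ⟨a', ha1, ha2⟩ | ⟨c', hc1, hc2⟩
  · -- v = u₁ ++ a', u₂ = a' ++ w
    rcases eq_or_ne a' [] with rfl | hane
    · rw [List.nil_append] at ha2
      rw [ha2]; exact key
    · have hvlt : v < a' := hvL u₁ a' h1 hane ha1
      have hnp : ¬ v <+: a' := by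
        intro hp
        have h1' := hp.length_le
        have h2' : a'.length < v.length := by
          rw [ha1, List.length_append]
          have := List.length_pos_iff.mpr h1
          omega
        omega
      rw [ha2]
      exact lt_append_of_lt_not_prefix' hvlt hnp w w
  · -- u₁ = v ++ c', w = c' ++ u₂
    rcases eq_or_ne c' [] with rfl | hcne
    · rw [List.nil_append] at hc2
      rw [← hc2]; exact key
    · have : w < u₂ := hwL c' u₂ hcne h2 hc2
      exact key.trans this

lemma isLyndon_of_length_one' {l : List α} (h : l.length = 1) : IsLyndon l := by
  refine ⟨by rintro rfl; simp at h, ?_⟩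
  intro u₁ u₂ h1 h2 heq
  exfalso
  have := List.length_pos_iff.mpr h1
  have := List.length_pos_iff.mpr h2
  rw [heq, List.length_append] at h
  omega

/-- Any word of length at least 2 has a lexicographically minimal proper nonempty suffix,
which is a Lyndon word. -/
lemma exists_min_lyndon_suffix' (x : List α) (hx : 2 ≤ x.length) :
    ∃ p s : List α, p ≠ [] ∧ s ≠ [] ∧ x = p ++ s ∧ IsLyndon s ∧
      ∀ p' t : List α, p' ≠ [] → t ≠ [] → x = p' ++ t → s ≤ t := by
  classical
  obtain ⟨i, hi', himin⟩ := Finset.exists_min_image (Finset.Ioo 0 x.length)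
    (fun i => x.drop i) ⟨1, by rw [Finset.mem_Ioo]; omega⟩
  rw [Finset.mem_Ioo] at hi'
  have hi : 0 < i ∧ i < x.length := hi'
  set s : List α := x.drop i with hdrop'
  have hdrop : x.drop i = s := rfl
  have hmin : ∀ p' t : List α, p' ≠ [] → t ≠ [] → x = p' ++ t → s ≤ t := by
    intro p' t hp' ht hxeq
    have hmem : p'.length ∈ Finset.Ioo 0 x.length := by
      rw [Finset.mem_Ioo]
      constructor
      · exact List.length_pos_iff.mpr hp'
      · rw [hxeq, List.length_append]
        have := List.length_pos_iff.mpr ht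
        omega
    have := himin p'.length hmem
    simpa [hxeq, List.drop_left] using this
  have hsne : s ≠ [] := by
    rw [← hdrop]
    intro h
    have := List.drop_eq_nil_iff.mp h
    omega
  refine ⟨x.take i, s, ?_, hsne, ?_, ⟨hsne, ?_⟩, hmin⟩
  · intro h
    have : (x.take i).length = 0 := by rw [h]; rfl
    rw [List.length_take] at this
    omega
  · rw [← hdrop, List.take_append_drop]
  · -- s is Lyndon: every proper suffix of s is a proper suffix of x
    intro s₁ s₂ h1 h2 heq
    have hx2 : x = (x.take i ++ s₁) ++ s₂ := by
      rw [List.append_assoc, ← heq, ← hdrop, List.take_append_drop]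
    have hle : s ≤ s₂ := hmin (x.take i ++ s₁) s₂ (by simp [h1]) h2 hx2
    have hne : s ≠ s₂ := by
      intro h
      have hl : s.length = s₁.length + s₂.length := by rw [heq, List.length_append]
      have h1' := List.length_pos_iff.mpr h1
      rw [h] at hl
      omega
    exact lt_of_le_of_ne hle hne

end LyndonAux2

/-- A word of length at least 2 is a Lyndon word iff it is the concatenation `u = v ++ w` of two
Lyndon words with `v < w`. -/
theorem isLyndon_iff_concat {α : Type*} [LinearOrder α] (u : List α) (hlen : 2 ≤ u.length) :
    IsLyndon u ↔ ∃ v w : List α, IsLyndon v ∧ IsLyndon w ∧ v < w ∧ u = v ++ w := by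
  constructor
  · intro hu
    classical
    -- the set of indices cutting off a proper Lyndon suffix
    set S : Set ℕ := {i | 0 < i ∧ i < u.length ∧ IsLyndon (u.drop i)} with hS
    have hSne : S.Nonempty := by
      refine ⟨u.length - 1, by omega, by omega, isLyndon_of_length_one' ?_⟩
      rw [List.length_drop]
      omega
    set i₀ : ℕ := sInf S with hi₀
    have hmem : i₀ ∈ S := Nat.sInf_mem hSne
    obtain ⟨hi0pos, hi0lt, hwL⟩ := hmem
    set v : List α := u.take i₀ with hv
    set w : List α := u.drop i₀ with hw
    have heq : u = v ++ w := (List.take_append_drop i₀ u).symm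
    have hvlen : v.length = i₀ := by rw [hv, List.length_take]; omega
    have hwlen : w.length = u.length - i₀ := by rw [hw, List.length_drop]
    have hvne : v ≠ [] := by
      intro h; rw [h] at hvlen; simp at hvlen; omega
    have hwne : w ≠ [] := by
      intro h; rw [h] at hwlen; simp at hwlen; omega
    have huw : u < w := hu.2 v w hvne hwne heq
    have hvu : v < u := by
      refine lt_of_prefix_ne' (List.take_prefix i₀ u) ?_
      intro h
      have : v.length = u.length := by rw [h]
      omega
    have hvw : v < w := hvu.trans huw
    refine ⟨v, w, ⟨hvne, ?_⟩, hwL, hvw, heq⟩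
    -- v is Lyndon
    intro v₁ v₂ h1 h2 hveq
    by_contra hlt
    have hv2v : v₂ ≤ v := not_lt.mp hlt
    have hvlen2 : 2 ≤ v.length := by
      rw [hveq, List.length_append]
      have := List.length_pos_iff.mpr h1
      have := List.length_pos_iff.mpr h2
      omega
    obtain ⟨p, s, hpne, hsne, hpseq, hsL, hsmin⟩ := exists_min_lyndon_suffix' v hvlen2
    have hsv2 : s ≤ v₂ := hsmin v₁ v₂ h1 h2 hveq
    have hsw : s < w := lt_of_le_of_lt (hsv2.trans hv2v) hvw
    have hswL : IsLyndon (s ++ w) := isLyndon_append' hsL hwL hsw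
    have hueq : u = p ++ (s ++ w) := by rw [heq, hpseq, List.append_assoc]
    have hdrop : u.drop p.length = s ++ w := by rw [hueq, List.drop_left]
    have hplen : p.length < i₀ := by
      have : v.length = p.length + s.length := by rw [hpseq, List.length_append]
      have := List.length_pos_iff.mpr hsne
      omega
    have hpmem : p.length ∈ S := by
      refine ⟨List.length_pos_iff.mpr hpne, by omega, ?_⟩
      rw [hdrop]; exact hswL
    have := Nat.sInf_le hpmem
    omega
  · rintro ⟨v, w, hv, hw, hvw, rfl⟩
    exact isLyndon_append' hv hw hvw
end

section
/- Let u be a Lyndon word of length at least 2 and write u = vw where w is the longest proper right factor of u that is itself a Lyndon word. Then v is also a Lyndon word and v < vw < w in lexicographic order. -/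
namespace List

variable {α : Type*} [LT α]

theorem lt_append_of_ne_nil (l : List α) {t : List α} (ht : t ≠ []) : l < l ++ t := by
  obtain ⟨a, t, rfl⟩ := exists_cons_of_ne_nil ht
  simpa using append_left_lt (l₁ := l) (nil_lt_cons a t)

theorem lt_or_exists_eq_append_of_append_lt_append {a b c : List α} (h : a ++ c < b ++ c)
    (hlen : b.length < a.length) : a < b ∨ ∃ s, s ≠ [] ∧ a = b ++ s ∧ s ++ c < c := by
  induction b generalizing a with
  | nil => exact Or.inr ⟨a, ne_nil_of_length_pos hlen, rfl, h⟩
  | cons y b ih =>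
    obtain ⟨x, a, rfl⟩ := exists_cons_of_length_pos (Nat.zero_lt_of_lt hlen)
    simp only [cons_append] at h
    rcases cons_lt_cons_iff.1 h with hxy | ⟨rfl, hac⟩
    · exact Or.inl (Lex.rel hxy)
    · rcases ih hac (by simpa using hlen) with hab | ⟨s, hs, rfl, hsc⟩
      · exact Or.inl (Lex.cons hab)
      · exact Or.inr ⟨s, hs, rfl, hsc⟩

end List

section Lyndon

variable {α : Type*} [LinearOrder α]

theorem isLyndon_append_of_append_lt {s w : List α} (hw : IsLyndon w) (hs : s ≠ [])
    (hsw : s ++ w < w)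
    (hmin : ∀ s', s' ≠ [] → s' <:+ s → s'.length < s.length → w ≤ s' ++ w) :
    IsLyndon (s ++ w) := by
  refine ⟨by simp [hs], fun x₁ x₂ hx₁ hx₂ hx => ?_⟩
  rcases List.append_eq_append_iff.1 hx with ⟨a, rfl, rfl⟩ | ⟨c, rfl, rfl⟩
  · rcases eq_or_ne a [] with rfl | ha
    · simpa using hsw
    · exact hsw.trans (hw.2 a x₂ ha hx₂ rfl)
  · rcases eq_or_ne c [] with rfl | hc
    · simpa using hsw
    · refine hsw.trans_le (hmin c hc (List.suffix_append x₁ c) ?_)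
      simpa using List.length_pos_iff.2 hx₁

theorem exists_suffix_isLyndon_append {s w : List α} (hw : IsLyndon w) (hs : s ≠ [])
    (hsw : s ++ w < w) : ∃ s', s' ≠ [] ∧ s' <:+ s ∧ IsLyndon (s' ++ w) := by
  induction hn : s.length using Nat.strong_induction_on generalizing s with
  | _ n ih =>
    by_cases hmin : ∀ s', s' ≠ [] → s' <:+ s → s'.length < s.length → w ≤ s' ++ w
    · exact ⟨s, hs, List.suffix_refl s, isLyndon_append_of_append_lt hw hs hsw hmin⟩
    · push Not at hmin
      obtain ⟨s', hs', hs's, hlen, hs'w⟩ := hmin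
      obtain ⟨t, ht, hts', htw⟩ := ih _ (hn ▸ hlen) hs' hs'w rfl
      exact ⟨t, ht, hts'.trans hs's, htw⟩

end Lyndon

theorem shirshov_decomposition_general {α : Type*} [LinearOrder α] (u v w : List α)
    (hu : IsLyndon u)
    (huvw : u = v ++ w) (hv : v ≠ []) (hw : w ≠ []) (hwL : IsLyndon w)
    (hmax : ∀ w' : List α, w' <:+ u → w' ≠ u → IsLyndon w' → w'.length ≤ w.length) :
    IsLyndon v ∧ v < v ++ w ∧ v ++ w < w := by
  subst huvw
  refine ⟨⟨hv, fun v₁ v₂ hv₁ hv₂ hv12 => ?_⟩, v.lt_append_of_ne_nil hw, hu.2 v w hv hw rfl⟩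
  have hlt : v ++ w < v₂ ++ w := hu.2 v₁ (v₂ ++ w) hv₁ (by simp [hw]) (by simp [hv12])
  have hlen : v₂.length < v.length := by
    simpa [hv12] using List.length_pos_iff.2 hv₁
  rcases List.lt_or_exists_eq_append_of_append_lt_append hlt hlen with h | ⟨s, hs, hv₂s, hsw⟩
  · exact h
  obtain ⟨t, ht, hts, htw⟩ := exists_suffix_isLyndon_append hwL hs hsw
  have hsv : s <:+ v := ⟨v₂, hv₂s.symm⟩
  have htv : t.length < v.length := by
    have := hts.length_le
    have := List.length_pos_iff.2 hv₂
    simp only [hv₂s, List.length_append]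
    omega
  have hwt := hmax (t ++ w) (List.suffix_append_self_iff.2 (hts.trans hsv))
    (fun h => htv.ne (by rw [List.append_cancel_right h])) htw
  rw [List.length_append] at hwt
  exact absurd (List.eq_nil_of_length_eq_zero (by omega)) ht

/-- Shirshov decomposition: if `u` is a Lyndon word of length at least `2` and `u = v ++ w`
where `w` is the longest proper right factor of `u` which is a Lyndon word, then `v` is also
a Lyndon word and `v < v ++ w < w`. -/
theorem shirshov_decomposition {α : Type*} [LinearOrder α] (u v w : List α)
    (hu : IsLyndon u) (hlen : 2 ≤ u.length)
    (huvw : u = v ++ w) (hv : v ≠ []) (hw : w ≠ []) (hwL : IsLyndon w)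
    (hmax : ∀ w' : List α, w' <:+ u → w' ≠ u → IsLyndon w' → w'.length ≤ w.length) :
    IsLyndon v ∧ v < v ++ w ∧ v ++ w < w :=
  shirshov_decomposition_general u v w hu huvw hv hw hwL hmax
end

section
/- Let u and v be Lyndon words with u = u₁u₂ for nonempty words u₁, u₂, and suppose u₂ < v in lexicographic order. Then uv < u₁v. -/
theorem List.Lex.exists_eq_append_or_append_lex {α : Type*} {r : α → α → Prop} {x y : List α}
    (h : List.Lex r x y) : (∃ w, w ≠ [] ∧ y = x ++ w) ∨ ∀ z, List.Lex r (x ++ z) y := by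
  induction h with
  | nil => exact Or.inl ⟨_, List.cons_ne_nil _ _, rfl⟩
  | cons _ ih =>
    rcases ih with ⟨w, hw, rfl⟩ | hall
    · exact Or.inl ⟨w, hw, rfl⟩
    · exact Or.inr fun z => List.Lex.cons (hall z)
  | rel hab => exact Or.inr fun _ => List.Lex.rel hab

theorem IsLyndon.append_lt_of_lt {α : Type*} [LinearOrder α] {v x : List α} (hv : IsLyndon v)
    (hx : x ≠ []) (hlt : x < v) : x ++ v < v := by
  rcases List.Lex.exists_eq_append_or_append_lex hlt with ⟨w, hw, rfl⟩ | hall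
  · exact List.append_left_lt (hv.2 x w hx hw rfl)
  · exact hall v

theorem concat_lt_of_suffix_lt_general {α : Type*} [LinearOrder α] (u v u₁ u₂ : List α)
    (hv : IsLyndon v) (h : u = u₁ ++ u₂)
    (h2 : u₂ ≠ []) (hlt : u₂ < v) :
    u ++ v < u₁ ++ v := by
  subst h
  rw [List.append_assoc]
  exact List.append_left_lt (hv.append_lt_of_lt h2 hlt)

/-- If `u` and `v` are Lyndon words, `u = u₁u₂` with `u₁, u₂` nonempty and `u₂ < v`, then
`uv < u₁v`. -/
theorem concat_lt_of_suffix_lt {α : Type*} [LinearOrder α] (u v u₁ u₂ : List α)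
    (hu : IsLyndon u) (hv : IsLyndon v) (h : u = u₁ ++ u₂)
    (h1 : u₁ ≠ []) (h2 : u₂ ≠ []) (hlt : u₂ < v) :
    u ++ v < u₁ ++ v :=
  concat_lt_of_suffix_lt_general u v u₁ u₂ hv h h2 hlt
end

section
/- If u = v₁v₂⋯vₙ is the factorization of a nonempty word u into a non-increasing product of Lyndon words, then vₙ is the lexicographically smallest nonempty right factor (suffix) of u. -/
/-- A list is lexicographically ≤ any list obtained by appending on the right. -/
lemma lt_append_right' {α : Type*} [LinearOrder α] (x y : List α) (hy : y ≠ []) :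
    x < x ++ y := by
  induction x with
  | nil =>
    cases y with
    | nil => exact absurd rfl hy
    | cons b t => exact List.Lex.nil
  | cons a t ih => exact List.Lex.cons ih

lemma le_append_right' {α : Type*} [LinearOrder α] (x y : List α) : x ≤ x ++ y := by
  by_cases hy : y = []
  · subst hy; simp
  · exact le_of_lt (lt_append_right' x y hy)

/-- In a non-increasing chain, the last element is ≤ the first. -/
lemma getLast_le_head {α : Type*} [LinearOrder α] :
    ∀ (l : List α) (hl : l ≠ []), List.Chain' (fun a b => b ≤ a) l →
      l.getLast hl ≤ l.head hl := by
  intro l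
  induction l with
  | nil => simp
  | cons a t ih =>
    intro _ hc
    cases t with
    | nil => simp
    | cons b t' =>
      have hba : b ≤ a := (List.isChain_cons_cons.mp hc).1
      have := ih (by simp) (List.isChain_cons_cons.mp hc).2
      simpa using le_trans (by simpa using this) hba

theorem last_aux {α : Type*} [LinearOrder α] :
    ∀ (l : List (List α)) (hl : l ≠ []), (∀ x ∈ l, IsLyndon x) →
    List.Chain' (fun a b => b ≤ a) l →
    ∀ s : List α, s ≠ [] → s <:+ l.flatten → l.getLast hl ≤ s := by
  intro l
  induction l with
  | nil => simp
  | cons a t ih =>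
    intro _ hL hm s hs hsuf
    have hLa : IsLyndon a := hL a List.mem_cons_self
    simp only [List.flatten_cons] at hsuf
    obtain ⟨p, hp⟩ := hsuf
    rcases (List.append_eq_append_iff.mp hp).symm with ⟨c, hc1, hc2⟩ | ⟨c, hc1, hc2⟩
    · -- s <:+ t.flatten
      have hsuf' : s <:+ t.flatten := ⟨c, hc2.symm⟩
      cases t with
      | nil =>
        simp only [List.flatten_nil, List.suffix_nil] at hsuf'
        exact absurd hsuf' hs
      | cons b t' =>
        have := ih (by simp) (fun x hx => hL x (List.mem_cons_of_mem _ hx))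
          (List.isChain_cons_cons.mp hm).2 s hs hsuf'
        simpa [List.getLast_cons] using this
    · -- s = c ++ t.flatten with a = p ++ c
      -- first: getLast (a :: t) ≤ a
      have hlast_le_a : (a :: t).getLast (by simp) ≤ a :=
        getLast_le_head (a :: t) (by simp) hm
      -- c is a suffix of a
      by_cases hc : c = []
      · -- s = t.flatten, s nonempty so t ≠ []
        subst hc
        simp only [List.nil_append] at hc2
        cases t with
        | nil => simp only [List.flatten_nil] at hc2; exact absurd hc2 hs
        | cons b t' =>
          have := ih (by simp) (fun x hx => hL x (List.mem_cons_of_mem _ hx))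
            (List.isChain_cons_cons.mp hm).2 s hs (by rw [hc2])
          simpa [List.getLast_cons] using this
      · -- c nonempty suffix of a; a ≤ c
        have hac : a ≤ c := by
          by_cases hpnil : p = []
          · subst hpnil; simp only [List.nil_append] at hc1; exact le_of_eq hc1
          · exact le_of_lt (hLa.2 p c hpnil hc hc1)
        calc (a :: t).getLast (by simp) ≤ a := hlast_le_a
          _ ≤ c := hac
          _ ≤ c ++ t.flatten := le_append_right' _ _
          _ = s := hc2.symm

/-- If `u = v₁⋯vₙ` is the non-increasing Lyndon factorization of a nonempty word `u`, then the
last factor `vₙ` is the lexicographically smallest nonempty right factor (suffix) of `u`. -/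
theorem last_factor_smallest_suffix {α : Type*} [LinearOrder α] (u : List α) (hu : u ≠ [])
    (l : List (List α)) (hL : ∀ x ∈ l, IsLyndon x)
    (hm : List.Chain' (fun a b => b ≤ a) l) (hj : l.flatten = u) (hl : l ≠ []) :
    ∀ s : List α, s ≠ [] → s <:+ u → l.getLast hl ≤ s := by
  intro s hs hsuf
  exact last_aux l hl hL hm s hs (hj ▸ hsuf)
end

section
/- Let w = w₁⋯wₙ be any product of Lyndon words (a super-word). Then the unique non-increasing Lyndon factorization of the word w₁⋯wₙ is greater than or equal to the sequence (w₁,…,wₙ) in the lexicographic order on finite sequences of Lyndon words (where Lyndon words are compared lexicographically as words). -/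
section Aux

variable {α : Type*} [LinearOrder α]

private lemma lt_append_of_ne_nil (u : List α) : ∀ t : List α, t ≠ [] → u < u ++ t := by
  induction u with
  | nil =>
    intro t ht
    cases t with
    | nil => exact absurd rfl ht
    | cons x xs => exact List.nil_lt_cons x xs
  | cons a u ih =>
    intro t ht
    exact List.Lex.cons (ih t ht)

private lemma le_of_prefix' {u v : List α} (h : u <+: v) : u ≤ v := by
  obtain ⟨t, rfl⟩ := h
  cases t with
  | nil => simp
  | cons x xs => exact le_of_lt (lt_append_of_ne_nil u (x :: xs) (by simp))

/-- If `v` is a nonempty prefix of the concatenation of a non-increasing sequence of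
Lyndon words with head `b`, then some nonempty suffix of `v` is `≤ b`. -/
private lemma exists_suffix_le :
    ∀ (l : List (List α)) (b : List α), (∀ x ∈ b :: l, IsLyndon x) →
      List.Chain' (fun a c => c ≤ a) (b :: l) →
      ∀ v : List α, v ≠ [] → v <+: (b :: l).flatten →
      ∃ t : List α, t ≠ [] ∧ t <:+ v ∧ t ≤ b := by
  intro l
  induction l with
  | nil =>
    intro b _ _ v hv hpre
    simp only [List.flatten_cons, List.flatten_nil, List.append_nil] at hpre
    exact ⟨v, hv, List.suffix_refl v, le_of_prefix' hpre⟩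
  | cons b₂ l₂ ih =>
    intro b hall hchain v hv hpre
    simp only [List.flatten_cons] at hpre
    rcases List.prefix_or_prefix_of_prefix hpre (List.prefix_append b _) with hvb | hbv
    · exact ⟨v, hv, List.suffix_refl v, le_of_prefix' hvb⟩
    · obtain ⟨v', rfl⟩ := hbv
      cases v' with
      | nil =>
        refine ⟨b, (hall b (by simp)).1, by simp, le_rfl⟩
      | cons y ys =>
        have hv' : (y :: ys) <+: (b₂ :: l₂).flatten := by
          obtain ⟨s, hs⟩ := hpre
          rw [List.append_assoc] at hs
          exact ⟨s, (List.append_cancel_left hs)⟩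
        have hall' : ∀ x ∈ b₂ :: l₂, IsLyndon x := fun x hx => hall x (List.mem_cons_of_mem _ hx)
        have hchain' : List.Chain' (fun a c => c ≤ a) (b₂ :: l₂) := hchain.tail
        obtain ⟨t, ht, hsuf, hle⟩ := ih b₂ hall' hchain' (y :: ys) (by simp) hv'
        have hb₂b : b₂ ≤ b := (List.isChain_cons_cons.mp hchain).1
        exact ⟨t, ht, hsuf.trans (List.suffix_append b (y :: ys)), hle.trans hb₂b⟩

/-- A Lyndon prefix of a non-increasing concatenation of Lyndon words is `≤` the head. -/
private lemma lyndon_prefix_le {a b : List α} {l : List (List α)} (ha : IsLyndon a)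
    (hall : ∀ x ∈ b :: l, IsLyndon x)
    (hchain : List.Chain' (fun a c => c ≤ a) (b :: l))
    (hpre : a <+: (b :: l).flatten) : a ≤ b := by
  obtain ⟨t, ht, hsuf, hle⟩ := exists_suffix_le l b hall hchain a ha.1 hpre
  obtain ⟨u, hu⟩ := hsuf
  cases u with
  | nil => simpa using hu ▸ hle
  | cons x xs =>
    have : a < t := ha.2 (x :: xs) t (by simp) ht hu.symm
    exact le_of_lt (lt_of_lt_of_le this hle)

end Aux

/-- Let `w = w₁⋯wₙ` be any sequence of Lyndon words (super-word). Then the non-increasing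
Lyndon factorization `l` of the concatenated word is `≥ w` in the lexicographic order on
finite sequences of Lyndon words. -/
theorem monotonic_decomposition_ge {α : Type*} [LinearOrder α] (w l : List (List α))
    (hw : ∀ x ∈ w, IsLyndon x)
    (hL : ∀ x ∈ l, IsLyndon x) (hm : List.Chain' (fun a b => b ≤ a) l)
    (hj : l.flatten = w.flatten) :
    w ≤ l := by
  induction w generalizing l with
  | nil => cases l with
    | nil => exact le_rfl
    | cons x xs => exact le_of_lt (List.nil_lt_cons x xs)
  | cons a w' ih =>
    have ha : IsLyndon a := hw a (by simp)
    cases l with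
    | nil =>
      simp only [List.flatten_nil, List.flatten_cons] at hj
      exact absurd (List.append_eq_nil_iff.mp hj.symm).1 ha.1
    | cons b l' =>
      have hpre : a <+: (b :: l').flatten := ⟨w'.flatten, by simp [hj, List.flatten_cons]⟩
      have hab : a ≤ b := lyndon_prefix_le ha hL hm hpre
      rcases lt_or_eq_of_le hab with hlt | heq
      · exact le_of_lt (List.Lex.rel hlt)
      · subst heq
        simp only [List.flatten_cons] at hj
        have hj' : l'.flatten = w'.flatten := List.append_cancel_left hj
        have := ih l' (fun x hx => hw x (List.mem_cons_of_mem _ hx))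
          (fun x hx => hL x (List.mem_cons_of_mem _ hx)) hm.tail hj'
        exact List.cons_le_cons a this
end

section
/- Let w = w₁⋯wₘ and v = v₁⋯vₙ be non-increasing sequences of Lyndon words (monotonic super-words). Then (w₁,…,wₘ) < (v₁,…,vₙ) in the lexicographic order on sequences of Lyndon words if and only if the concatenated word w₁⋯wₘ is lexicographically smaller than the concatenated word v₁⋯vₙ as words over the alphabet A. -/
namespace LyndonAux

variable {α : Type*} [LinearOrder α]

/-- `x` followed by anything is lexicographically below `v` followed by anything. -/
def Str (x v : List α) : Prop := ∀ z t : List α, x ++ z < v ++ t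

/-- `Below' x v`: `x` is a strict prefix of `v`, or `Str x v`. -/
def Below' (x v : List α) : Prop := (x <+: v ∧ x ≠ v) ∨ Str x v

lemma lex_append_cons (x : List α) (a : α) (t : List α) : x < x ++ a :: t := by
  induction x with
  | nil => exact List.Lex.nil
  | cons b x ih => exact List.Lex.cons ih

lemma lt_append_of_strict_prefix {x v : List α} (h : x <+: v) (hne : x ≠ v) (t : List α) :
    x < v ++ t := by
  obtain ⟨r, rfl⟩ := h
  cases r with
  | nil => simp at hne
  | cons a r =>
    rw [List.append_assoc]
    exact lex_append_cons x a (r ++ t)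

lemma str_of_lex {x s : List α} (h : List.Lex (· < ·) x s) (hp : ¬ x <+: s) : Str x s := by
  induction h with
  | nil => exact absurd (List.nil_prefix) hp
  | @cons a x s h ih =>
    intro z t
    have hp' : ¬ x <+: s := fun h' => hp (List.cons_prefix_cons.mpr ⟨rfl, h'⟩)
    exact List.Lex.cons (ih hp' z t)
  | rel h => intro z t; exact List.Lex.rel h

lemma str_of_lt_not_prefix {x s : List α} (h : x < s) (hp : ¬ x <+: s) : Str x s :=
  str_of_lex h hp

lemma below'_lt {x v : List α} (h : Below' x v) (t : List α) : x < v ++ t := by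
  rcases h with ⟨hp, hne⟩ | hs
  · exact lt_append_of_strict_prefix hp hne t
  · have := hs [] t
    simpa using this

lemma below'_trans {x v s : List α} (h : Below' x v) (hvs : Str v s) : Below' x s := by
  have hxv : x < v := by
    rcases h with ⟨hp, hne⟩ | hs
    · simpa using lt_append_of_strict_prefix hp hne []
    · simpa using hs [] []
  have hv_s : v < s := by simpa using hvs [] []
  have hxs : x < s := lt_trans hxv hv_s
  by_cases hp : x <+: s
  · exact Or.inl ⟨hp, fun h => absurd hxs (h ▸ lt_irrefl _)⟩
  · exact Or.inr (str_of_lt_not_prefix hxs hp)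

lemma flatten_below' : ∀ (w : List (List α)), (∀ x ∈ w, IsLyndon x) →
    List.Chain' (fun a b => b ≤ a) w → ∀ v : List α, IsLyndon v → (∀ x ∈ w, x < v) →
    Below' w.flatten v
  | [], _, _, v, hv, _ => Or.inl ⟨List.nil_prefix, fun h => hv.1 h.symm⟩
  | u :: w', hw, hc, v, hv, hlt => by
    have hu_ne : u ≠ [] := (hw u (List.mem_cons_self (a := u) (l := w'))).1
    have hw' : ∀ x ∈ w', IsLyndon x := fun x hx => hw x (List.mem_cons_of_mem u hx)
    have hc' : List.Chain' (fun a b : List α => b ≤ a) w' := hc.tail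
    have hle : ∀ x ∈ w', x ≤ u := by
      have htrans : IsTrans (List α) (fun a b : List α => b ≤ a) :=
        ⟨fun a b c hab hbc => le_trans hbc hab⟩
      have := (List.isChain_iff_pairwise (R := fun a b : List α => b ≤ a)).mp hc
      exact fun x hx => (List.pairwise_cons.mp this).1 x hx
    by_cases hp : u <+: v
    · obtain ⟨s, rfl⟩ := hp
      have hs_ne : s ≠ [] := by
        rintro rfl
        exact absurd (hlt u (List.mem_cons_self (a := u) (l := w'))) (by simp)
      have hvlt : u ++ s < s := hv.2 u s hu_ne hs_ne rfl
      have hnp : ¬ (u ++ s) <+: s := by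
        intro hp'
        have := hp'.length_le
        simp only [List.length_append] at this
        have : u.length = 0 := by omega
        exact hu_ne (List.length_eq_zero_iff.mp this)
      have hstr : Str (u ++ s) s := str_of_lt_not_prefix hvlt hnp
      have ih : Below' w'.flatten (u ++ s) :=
        flatten_below' w' hw' hc' (u ++ s) hv fun x hx =>
          lt_of_le_of_lt (hle x hx) (hlt u (List.mem_cons_self (a := u) (l := w')))
      have ih2 : Below' w'.flatten s := below'_trans ih hstr
      rcases ih2 with ⟨hpre, hne⟩ | hstr2
      · left
        constructor
        · rw [List.flatten_cons]
          obtain ⟨r, hr⟩ := hpre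
          exact ⟨r, by rw [List.append_assoc, hr]⟩
        · intro h
          rw [List.flatten_cons] at h
          exact hne (List.append_cancel_left h)
      · right
        intro z t
        rw [List.flatten_cons, List.append_assoc, List.append_assoc]
        exact List.Lex.append_left _ (hstr2 z t) u
    · right
      have hstr : Str u v := str_of_lt_not_prefix (hlt u (List.mem_cons_self (a := u) (l := w'))) hp
      intro z t
      rw [List.flatten_cons, List.append_assoc]
      exact hstr _ t

lemma main_forward : ∀ (w v : List (List α)), List.Lex (· < ·) w v →
    (∀ x ∈ w, IsLyndon x) → (∀ x ∈ v, IsLyndon x) →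
    List.Chain' (fun a b => b ≤ a) w → List.Chain' (fun a b => b ≤ a) v →
    w.flatten < v.flatten := by
  intro w v h'
  induction h' with
  | @nil a l =>
    intro _ hv _ _
    have ha : a ≠ [] := (hv a (List.mem_cons_self (a := a) (l := l))).1
    rw [List.flatten_nil, List.flatten_cons]
    cases a with
    | nil => simp at ha
    | cons b a' => exact List.Lex.nil
  | @cons u w' v' h ih =>
    intro hw hv hwm hvm
    rw [List.flatten_cons, List.flatten_cons]
    have : w'.flatten < v'.flatten :=
      ih (fun x hx => hw x (List.mem_cons_of_mem u hx))
        (fun x hx => hv x (List.mem_cons_of_mem u hx)) hwm.tail hvm.tail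
    exact List.Lex.append_left _ this u
  | @rel u w' v₁ v' h =>
    intro hw hv hwm hvm
    have hlt : ∀ x ∈ u :: w', x < v₁ := by
      have hpw := (List.isChain_iff_pairwise (R := fun a b : List α => b ≤ a)).mp hwm
      intro x hx
      rcases List.mem_cons.mp hx with rfl | hx
      · exact h
      · exact lt_of_le_of_lt ((List.pairwise_cons.mp hpw).1 x hx) h
    have hb : Below' (u :: w').flatten v₁ :=
      flatten_below' (u :: w') hw hwm v₁ (hv v₁ (List.mem_cons_self (a := v₁) (l := v'))) hlt
    rw [List.flatten_cons (l := v₁)]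
    exact below'_lt hb v'.flatten

end LyndonAux

/-- For monotonic super-words `w` and `v` (non-increasing sequences of Lyndon words), `w < v`
in the lexicographic order on sequences of Lyndon words iff the concatenated word of `w` is
lexicographically smaller than the concatenated word of `v`. -/
theorem monotonic_superword_lt_iff {α : Type*} [LinearOrder α] (w v : List (List α))
    (hw : ∀ x ∈ w, IsLyndon x) (hv : ∀ x ∈ v, IsLyndon x)
    (hwm : List.Chain' (fun a b => b ≤ a) w) (hvm : List.Chain' (fun a b => b ≤ a) v) :
    w < v ↔ w.flatten < v.flatten := by
  constructor
  · intro h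
    exact LyndonAux.main_forward w v h hw hv hwm hvm
  · intro h
    rcases lt_trichotomy w v with h' | rfl | h'
    · exact h'
    · exact absurd h (lt_irrefl _)
    · exact absurd (LyndonAux.main_forward v w h' hv hw hvm hwm) (asymm h)
end

section
/- The tensor algebra TV decomposes as a direct sum TV = ⊕_{u ∈ M} V^{[u]}, where M is the set of monotonic super-words (non-increasing products of Lyndon words, including the empty word) and V^{[u]} = [V^u] is the space of u-bracket-words. -/
open TensorProduct

/-- `ShirshovDecomp u v w` means `u = v ++ w` where `w` is the longest proper right factor of
`u` which is a Lyndon word (and `v` is nonempty). -/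
def ShirshovDecomp {α : Type*} [LinearOrder α] (u v w : List α) : Prop :=
  u = v ++ w ∧ v ≠ [] ∧ w ≠ [] ∧ IsLyndon w ∧
    ∀ w' : List α, w' <:+ u → w' ≠ u → IsLyndon w' → w'.length ≤ w.length

/-- For a word `u = a₁⋯aₘ` over the alphabet `ι`, the space of `u`-vectors
`V^u = V_{a₁}·V_{a₂}⋯V_{aₘ} ⊆ T` (the canonical image of `V_{a₁}⊗⋯⊗V_{aₘ}`). -/
def Vword {k T ι : Type*} [CommSemiring k] [Semiring T] [Algebra k T]
    (V : ι → Submodule k T) (u : List ι) : Submodule k T :=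
  (u.map V).prod

section Bracket

variable {k T ι : Type*} [Field k] [Ring T] [Algebra k T] [LinearOrder ι]

/-- `IsBracketing V cinv Br` says that the family of linear maps `Br u` is the iterated
bracketing `[·]` of `u`-vectors with respect to the inverse braiding `cinv`:
it is the identity on letters, it is given by the skew bracket
`[x,y] = xy − m∘c⁻¹(x⊗y)` of the two parts of the Shirshov decomposition on Lyndon words,
and it is multiplicative along the monotonic (Chen–Fox–Lyndon) factorization, whose first
factor is the longest Lyndon prefix. -/
def IsBracketing (V : ι → Submodule k T) (cinv : T ⊗[k] T →ₗ[k] T ⊗[k] T)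
    (Br : List ι → T →ₗ[k] T) : Prop :=
  (∀ x ∈ (1 : Submodule k T), Br [] x = x) ∧
  (∀ a : ι, ∀ x ∈ V a, Br [a] x = x) ∧
  (∀ u v w : List ι, IsLyndon u → ShirshovDecomp u v w →
    ∀ x ∈ Vword V v, ∀ y ∈ Vword V w,
      Br u (x * y) =
        (LinearMap.mul' k T - LinearMap.mul' k T ∘ₗ cinv) ((Br v x) ⊗ₜ (Br w y))) ∧
  (∀ u v w : List ι, u = v ++ w → IsLyndon v → w ≠ [] →
    (∀ v' : List ι, v' <+: u → IsLyndon v' → v'.length ≤ v.length) →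
    ∀ x ∈ Vword V v, ∀ y ∈ Vword V w, Br u (x * y) = Br v x * Br w y)

/-- The key property of the inverse braiding on `TV` induced by the Yetter–Drinfeld structure
of `V = ⊕ᵢ Vᵢ`: it maps `V^u ⊗ V^v` into `V^v ⊗ V^u`. -/
def BraidingCompat (V : ι → Submodule k T) (cinv : T ⊗[k] T →ₗ[k] T ⊗[k] T) : Prop :=
  ∀ u v : List ι, ∀ x,
    x ∈ LinearMap.range (TensorProduct.map (Vword V u).subtype (Vword V v).subtype) →
      cinv x ∈ LinearMap.range (TensorProduct.map (Vword V v).subtype (Vword V u).subtype)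

end Bracket

/-! ### Auxiliary material -/

namespace BWDaux

section Lex

variable {ι : Type*} [LinearOrder ι]

theorem lex_append_left {v a b : List ι} (h : a < b) : v ++ a < v ++ b :=
  List.Lex.append_left _ h v

theorem lex_append_of_lt : ∀ {v v' : List ι}, v < v' → v.length = v'.length →
    ∀ (a b : List ι), v ++ a < v' ++ b
  | _, _, List.Lex.nil, h => by simp at h
  | _, _, List.Lex.cons h1, h => fun a b =>
      List.Lex.cons (lex_append_of_lt h1 (by simpa using h) a b)
  | _, _, List.Lex.rel h1, _ => fun _ _ => List.Lex.rel h1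

theorem lt_append_right (v t : List ι) (ht : t ≠ []) : v < v ++ t := by
  have h : ([] : List ι) < t := by
    cases t with
    | nil => exact absurd rfl ht
    | cons c l => exact List.Lex.nil
  have := List.Lex.append_left (· < ·) (show List.Lex (· < ·) [] t from h) v
  simpa using this

theorem perm_ne_nil {u w : List ι} (h : u.Perm w) (hu : u ≠ []) :
    w ≠ [] := by
  intro hw
  apply hu
  have := h.length_eq
  rw [hw] at this
  simpa using List.length_eq_zero_iff.mp this

theorem singleton_lyndon {l : List ι} (h : l.length = 1) : IsLyndon l := by
  refine ⟨by intro h'; simp [h'] at h, ?_⟩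
  intro u₁ u₂ h1 h2 he
  exfalso
  have h1' : 0 < u₁.length := List.length_pos_iff.mpr h1
  have h2' : 0 < u₂.length := List.length_pos_iff.mpr h2
  have := congrArg List.length he
  simp only [List.length_append] at this
  omega

theorem suffix_drop_eq {w' u : List ι} (h : w' <:+ u) :
    u.drop (u.length - w'.length) = w' := by
  obtain ⟨t, rfl⟩ := h
  have hl : (t ++ w').length - w'.length = t.length := by simp [List.length_append]
  rw [hl, List.drop_left]

theorem exists_shirshov {u : List ι} (h2 : 2 ≤ u.length) :
    ∃ v w, ShirshovDecomp u v w := by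
  classical
  set P : ℕ → Prop := fun m => m < u.length ∧ IsLyndon (u.drop (u.length - m)) with hP
  have hP1 : P 1 := ⟨by omega, singleton_lyndon (by rw [List.length_drop]; omega)⟩
  set m := Nat.findGreatest P u.length with hm
  have hm1 : 1 ≤ m := Nat.le_findGreatest (by omega) hP1
  have hmspec : P m := Nat.findGreatest_spec (m := 1) (by omega) hP1
  have hmlt : m < u.length := hmspec.1
  refine ⟨u.take (u.length - m), u.drop (u.length - m),
    (List.take_append_drop _ u).symm, ?_, ?_, hmspec.2, ?_⟩
  · intro h
    have := congrArg List.length h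
    simp only [List.length_take, List.length_nil] at this
    omega
  · intro h
    have := congrArg List.length h
    simp only [List.length_drop, List.length_nil] at this
    omega
  · intro w' hsuf hne hLw'
    have hw'len : w'.length < u.length :=
      lt_of_le_of_ne hsuf.length_le fun h => hne (hsuf.eq_of_length h)
    have hPw : P w'.length := ⟨hw'len, by rwa [suffix_drop_eq hsuf]⟩
    have hle := Nat.le_findGreatest (le_of_lt hw'len) hPw
    rw [List.length_drop]
    omega

theorem exists_prefix_decomp {u : List ι} (hu : u ≠ []) (hnL : ¬ IsLyndon u) :
    ∃ v w, u = v ++ w ∧ IsLyndon v ∧ w ≠ [] ∧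
      (∀ v', v' <+: u → IsLyndon v' → v'.length ≤ v.length) := by
  classical
  have h1len : 1 ≤ u.length := List.length_pos_iff.mpr hu
  set P : ℕ → Prop := fun m => 0 < m ∧ IsLyndon (u.take m) with hP
  have hP1 : P 1 := ⟨one_pos, singleton_lyndon (by rw [List.length_take]; omega)⟩
  set m := Nat.findGreatest P u.length with hm
  have hm1 : 1 ≤ m := Nat.le_findGreatest h1len hP1
  have hmspec : P m := Nat.findGreatest_spec (m := 1) h1len hP1
  have hmle : m ≤ u.length := Nat.findGreatest_le _
  have hmlt : m < u.length := by
    rcases lt_or_eq_of_le hmle with h | h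
    · exact h
    · exfalso; apply hnL
      have := hmspec.2
      rwa [h, List.take_length] at this
  refine ⟨u.take m, u.drop m, (List.take_append_drop _ _).symm, hmspec.2, ?_, ?_⟩
  · intro h
    have := congrArg List.length h
    simp only [List.length_drop, List.length_nil] at this
    omega
  · intro v' hpre hLv'
    have hPv : P v'.length :=
      ⟨List.length_pos_iff.mpr hLv'.1, by rwa [← List.prefix_iff_eq_take.mp hpre]⟩
    have hle := Nat.le_findGreatest hpre.length_le hPv
    rw [List.length_take]
    omega

end Lex

section Modules

variable {k T ι : Type*} [Field k] [Ring T] [Algebra k T] [LinearOrder ι]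

theorem Vword_nil (V : ι → Submodule k T) : Vword V [] = 1 := by simp [Vword]

theorem Vword_singleton (V : ι → Submodule k T) (a : ι) : Vword V [a] = V a := by
  simp [Vword]

theorem Vword_append (V : ι → Submodule k T) (a b : List ι) :
    Vword V (a ++ b) = Vword V a * Vword V b := by
  simp [Vword, List.prod_append]

/-- The space spanned by the `V^w` for `w` a strictly bigger anagram of `u`. -/
def higher (V : ι → Submodule k T) (u : List ι) : Submodule k T :=
  ⨆ w : {w : List ι // u.Perm w ∧ u < w}, Vword V w.1

theorem Vword_le_higher {V : ι → Submodule k T} {u w : List ι}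
    (h1 : u.Perm w) (h2 : u < w) : Vword V w ≤ higher V u :=
  le_iSup (fun w : {w : List ι // u.Perm w ∧ u < w} => Vword V w.1) ⟨w, h1, h2⟩

theorem linear_mem_of_mem_iSup {η : Sort*} (p : η → Submodule k T) (f : T →ₗ[k] T)
    (H : Submodule k T) (hf : ∀ i, ∀ a ∈ p i, f a ∈ H) {x : T} (hx : x ∈ ⨆ i, p i) :
    f x ∈ H := by
  refine Submodule.iSup_induction p (motive := fun a => f a ∈ H) hx hf (by simp) ?_
  intro a b ha hb
  rw [map_add]
  exact add_mem ha hb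

theorem bilin_mem_of_mem_iSup {η η' : Sort*} (p : η → Submodule k T) (q : η' → Submodule k T)
    (F : T →ₗ[k] T →ₗ[k] T) (H : Submodule k T)
    (hF : ∀ i j, ∀ a ∈ p i, ∀ b ∈ q j, F a b ∈ H)
    {x y : T} (hx : x ∈ ⨆ i, p i) (hy : y ∈ ⨆ j, q j) : F x y ∈ H := by
  refine linear_mem_of_mem_iSup p (F.flip y) H (fun i a ha => ?_) hx
  exact linear_mem_of_mem_iSup q (F a) H (fun j b hb => hF i j a ha b hb) hy

theorem mul'_range_mem (p q : Submodule k T) {z : T ⊗[k] T}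
    (hz : z ∈ LinearMap.range (TensorProduct.map p.subtype q.subtype)) :
    LinearMap.mul' k T z ∈ p * q := by
  obtain ⟨t, rfl⟩ := hz
  induction t with
  | zero => simp
  | tmul a b => simpa [LinearMap.mul'_apply] using Submodule.mul_mem_mul a.2 b.2
  | add a b ha hb => rw [map_add, map_add]; exact add_mem ha hb

theorem cinv_mul_mem {V : ι → Submodule k T} {cinv : T ⊗[k] T →ₗ[k] T ⊗[k] T}
    (hc : BraidingCompat V cinv) {v w : List ι} {x y : T}
    (hx : x ∈ Vword V v) (hy : y ∈ Vword V w) :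
    LinearMap.mul' k T (cinv (x ⊗ₜ[k] y)) ∈ Vword V (w ++ v) := by
  have h1 : x ⊗ₜ[k] y ∈
      LinearMap.range (TensorProduct.map (Vword V v).subtype (Vword V w).subtype) :=
    ⟨(⟨x, hx⟩ : Vword V v) ⊗ₜ (⟨y, hy⟩ : Vword V w), by simp⟩
  have h2 := mul'_range_mem (Vword V w) (Vword V v) (hc v w _ h1)
  rwa [Vword_append]

theorem Vword_mul_higher_le (V : ι → Submodule k T) (v w : List ι) :
    Vword V v * higher V w ≤ higher V (v ++ w) := by
  conv_lhs => rw [higher, Submodule.mul_iSup]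
  refine iSup_le fun w' => ?_
  rw [← Vword_append]
  exact Vword_le_higher ((List.Perm.refl v).append w'.2.1) (lex_append_left w'.2.2)

theorem higher_mul_Vword_le (V : ι → Submodule k T) (v w : List ι) :
    higher V v * Vword V w ≤ higher V (v ++ w) := by
  conv_lhs => rw [higher, Submodule.iSup_mul]
  refine iSup_le fun v' => ?_
  rw [← Vword_append]
  exact Vword_le_higher (v'.2.1.append (List.Perm.refl w))
    (lex_append_of_lt v'.2.2 v'.2.1.length_eq w w)

theorem higher_mul_higher_le (V : ι → Submodule k T) (v w : List ι) :
    higher V v * higher V w ≤ higher V (v ++ w) := by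
  conv_lhs => rw [higher, higher, Submodule.iSup_mul]
  refine iSup_le fun v' => ?_
  conv_lhs => rw [Submodule.mul_iSup]
  refine iSup_le fun w' => ?_
  rw [← Vword_append]
  exact Vword_le_higher (v'.2.1.append w'.2.1)
    (lex_append_of_lt v'.2.2 v'.2.1.length_eq _ _)

theorem prod_step {V : ι → Submodule k T} {v w : List ι} {x y p q : T}
    (hx : x ∈ Vword V v) (hy : y ∈ Vword V w)
    (hp : p ∈ higher V v) (hq : q ∈ higher V w) :
    (x + p) * (y + q) - x * y ∈ higher V (v ++ w) := by
  have e : (x + p) * (y + q) - x * y = x * q + (p * y + p * q) := by noncomm_ring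
  rw [e]
  refine add_mem (Vword_mul_higher_le V v w (Submodule.mul_mem_mul hx hq))
    (add_mem (higher_mul_Vword_le V v w (Submodule.mul_mem_mul hp hy))
      (higher_mul_higher_le V v w (Submodule.mul_mem_mul hp hq)))

theorem cinv_step {V : ι → Submodule k T} {cinv : T ⊗[k] T →ₗ[k] T ⊗[k] T}
    (hc : BraidingCompat V cinv) {v w : List ι} (hv : v ≠ []) (hw : w ≠ [])
    (hLu : IsLyndon (v ++ w)) {b c : T}
    (hb : b ∈ Vword V v ⊔ higher V v) (hcc : c ∈ Vword V w ⊔ higher V w) :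
    LinearMap.mul' k T (cinv (b ⊗ₜ[k] c)) ∈ higher V (v ++ w) := by
  set F : T →ₗ[k] T →ₗ[k] T :=
    (TensorProduct.mk k T T).compr₂ (LinearMap.mul' k T ∘ₗ cinv) with hF
  have hFapp : ∀ a b' : T, F a b' = LinearMap.mul' k T (cinv (a ⊗ₜ[k] b')) := by
    intro a b'; rfl
  set famV : Option {v' : List ι // v.Perm v' ∧ v < v'} → Submodule k T :=
    fun o => Vword V (o.elim v Subtype.val) with hfamV
  set famW : Option {w' : List ι // w.Perm w' ∧ w < w'} → Submodule k T :=
    fun o => Vword V (o.elim w Subtype.val) with hfamW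
  have hbV : b ∈ ⨆ o, famV o := by
    rw [iSup_option (f := famV)]
    exact hb
  have hcW : c ∈ ⨆ o, famW o := by
    rw [iSup_option (f := famW)]
    exact hcc
  have hmain : F b c ∈ higher V (v ++ w) := by
    refine bilin_mem_of_mem_iSup famV famW F _ ?_ hbV hcW
    intro o o' a ha b' hb'
    set v'' := o.elim v Subtype.val with hv''
    set w'' := o'.elim w Subtype.val with hw''
    have hpv : v.Perm v'' ∧ v ≤ v'' := by
      cases o with
      | none => exact ⟨List.Perm.refl v, le_rfl⟩
      | some s => exact ⟨s.2.1, le_of_lt s.2.2⟩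
    have hpw : w.Perm w'' ∧ w ≤ w'' := by
      cases o' with
      | none => exact ⟨List.Perm.refl w, le_rfl⟩
      | some s => exact ⟨s.2.1, le_of_lt s.2.2⟩
    have hv''ne : v'' ≠ [] := perm_ne_nil hpv.1 hv
    have huw : v ++ w < w := hLu.2 v w hv hw rfl
    have hlt : v ++ w < w'' ++ v'' := by
      rcases lt_or_eq_of_le hpw.2 with h | h
      · refine lt_trans huw ?_
        have := lex_append_of_lt h hpw.1.length_eq [] v''
        simpa using this
      · rw [← h]
        exact lt_trans huw (lt_append_right w v'' hv''ne)
    have hperm : (v ++ w).Perm (w'' ++ v'') :=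
      (List.perm_append_comm).trans (hpw.1.append hpv.1)
    rw [hFapp a b']
    exact Vword_le_higher hperm hlt (cinv_mul_mem hc ha hb')
  rwa [hFapp b c] at hmain

/-- The key triangularity lemma: `Br u x` equals `x` modulo strictly bigger anagram words. -/
theorem key {V : ι → Submodule k T} {cinv : T ⊗[k] T →ₗ[k] T ⊗[k] T}
    (hc : BraidingCompat V cinv) {Br : List ι → T →ₗ[k] T}
    (hBr : IsBracketing V cinv Br) :
    ∀ (u : List ι), ∀ x ∈ Vword V u, Br u x - x ∈ higher V u := by
  classical
  obtain ⟨h1, h2, h3, h4⟩ := hBr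
  suffices H : ∀ n (u : List ι), u.length ≤ n → ∀ x ∈ Vword V u, Br u x - x ∈ higher V u by
    intro u
    exact H u.length u le_rfl
  intro n
  induction n with
  | zero =>
    intro u hu x hx
    have : u = [] := List.length_eq_zero_iff.mp (Nat.le_zero.mp hu)
    subst this
    rw [Vword_nil] at hx
    rw [h1 x hx]
    simp
  | succ n ih =>
    intro u hu x hx
    match u, hu with
    | [], _ =>
      rw [Vword_nil] at hx
      rw [h1 x hx]
      simp
    | [a], _ =>
      rw [Vword_singleton] at hx
      rw [h2 a x hx]
      simp
    | a :: b :: l, hu =>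
      set u := a :: b :: l with hudef
      have hlen2 : 2 ≤ u.length := by simp [hudef]
      by_cases hL : IsLyndon u
      · -- Lyndon case
        obtain ⟨v, w, hSh⟩ := exists_shirshov hlen2
        obtain ⟨huvw, hvne, hwne, hLw, hmax⟩ := hSh
        have hlv : 0 < v.length := List.length_pos_iff.mpr hvne
        have hlw : 0 < w.length := List.length_pos_iff.mpr hwne
        have hsumlen : u.length = v.length + w.length := by
          rw [huvw, List.length_append]
        have hvlen : v.length ≤ n := by omega
        have hwlen : w.length ≤ n := by omega
        have hx' : x ∈ Vword V v * Vword V w := by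
          rw [← Vword_append, ← huvw]; exact hx
        refine Submodule.mul_induction_on hx' ?_ ?_
        · intro x' hx'' y' hy'
          rw [h3 u v w hL ⟨huvw, hvne, hwne, hLw, hmax⟩ x' hx'' y' hy']
          have hp := ih v hvlen x' hx''
          have hq := ih w hwlen y' hy'
          have hBv : Br v x' = x' + (Br v x' - x') := by abel
          have hBw : Br w y' = y' + (Br w y' - y') := by abel
          have e : (LinearMap.mul' k T - LinearMap.mul' k T ∘ₗ cinv)
              ((Br v x') ⊗ₜ (Br w y')) - x' * y' =
              (Br v x' * Br w y' - x' * y') -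
                LinearMap.mul' k T (cinv ((Br v x') ⊗ₜ (Br w y'))) := by
            simp only [LinearMap.sub_apply, LinearMap.coe_comp, Function.comp_apply,
              LinearMap.mul'_apply]
            abel
          rw [e]
          have hm1 : Br v x' * Br w y' - x' * y' ∈ higher V (v ++ w) := by
            rw [hBv, hBw]
            exact prod_step hx'' hy' hp hq
          have hm2 : LinearMap.mul' k T (cinv ((Br v x') ⊗ₜ (Br w y'))) ∈
              higher V (v ++ w) := by
            refine cinv_step hc hvne hwne (huvw ▸ hL) ?_ ?_
            · rw [hBv]
              exact add_mem (Submodule.mem_sup_left hx'') (Submodule.mem_sup_right hp)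
            · rw [hBw]
              exact add_mem (Submodule.mem_sup_left hy') (Submodule.mem_sup_right hq)
          rw [huvw]
          exact sub_mem hm1 hm2
        · intro x₁ x₂ hx₁ hx₂
          have e : Br u (x₁ + x₂) - (x₁ + x₂) = (Br u x₁ - x₁) + (Br u x₂ - x₂) := by
            rw [map_add]; abel
          rw [e]
          exact add_mem hx₁ hx₂
      · -- non-Lyndon case
        obtain ⟨v, w, huvw, hLv, hwne, hmax⟩ :=
          exists_prefix_decomp (by simp [hudef]) hL
        have hvne : v ≠ [] := hLv.1
        have hlv : 0 < v.length := List.length_pos_iff.mpr hvne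
        have hlw : 0 < w.length := List.length_pos_iff.mpr hwne
        have hsumlen : u.length = v.length + w.length := by
          rw [huvw, List.length_append]
        have hvlen : v.length ≤ n := by omega
        have hwlen : w.length ≤ n := by omega
        have hx' : x ∈ Vword V v * Vword V w := by
          rw [← Vword_append, ← huvw]; exact hx
        refine Submodule.mul_induction_on hx' ?_ ?_
        · intro x' hx'' y' hy'
          rw [h4 u v w huvw hLv hwne hmax x' hx'' y' hy']
          have hp := ih v hvlen x' hx''
          have hq := ih w hwlen y' hy'
          have hBv : Br v x' = x' + (Br v x' - x') := by abel
          have hBw : Br w y' = y' + (Br w y' - y') := by abel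
          rw [hBv, hBw, huvw]
          exact prod_step hx'' hy' hp hq
        · intro x₁ x₂ hx₁ hx₂
          have e : Br u (x₁ + x₂) - (x₁ + x₂) = (Br u x₁ - x₁) + (Br u x₂ - x₂) := by
            rw [map_add]; abel
          rw [e]
          exact add_mem hx₁ hx₂

end Modules

end BWDaux

/-- The tensor algebra `TV` (a graded algebra `T` generated freely by
`V = ⊕ᵢ Vᵢ`, so that the subspaces `V^u` are independent with supremum `⊤`) decomposes as a
direct sum `TV = ⊕_{u ∈ M} V^{[u]}` of the spaces of `u`-bracket-words `V^{[u]} = [V^u]`,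
where `u` runs over monotonic super-words (identified with arbitrary words via the
Chen–Fox–Lyndon factorization). -/
theorem bracket_word_decomposition {k T ι : Type*} [Field k] [Ring T] [Algebra k T]
    [LinearOrder ι]
    (V : ι → Submodule k T) (cinv : T ⊗[k] T →ₗ[k] T ⊗[k] T)
    (hc : BraidingCompat V cinv)
    (Br : List ι → T →ₗ[k] T) (hBr : IsBracketing V cinv Br)
    (hsup : ⨆ u : List ι, Vword V u = ⊤)
    (hind : iSupIndep fun u : List ι => Vword V u) :
    iSupIndep (fun u : List ι => (Vword V u).map (Br u)) ∧
      (⨆ u : List ι, (Vword V u).map (Br u)) = ⊤ := by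
  classical
  open BWDaux in
  have hkey := BWDaux.key hc hBr
  set W : List ι → Submodule k T := fun u => (Vword V u).map (Br u) with hW
  -- the zero-sum lemma
  have hzero : ∀ (s : Finset (List ι)) (z : List ι → T),
      (∀ u ∈ s, z u ∈ W u) → (∑ u ∈ s, z u) = 0 → ∀ u ∈ s, z u = 0 := by
    intro s z hz hsum
    by_contra hcon
    push_neg at hcon
    obtain ⟨u₀, hu₀s, hu₀⟩ := hcon
    set C : Finset (List ι) := s.filter (fun u => u₀.Perm u ∧ z u ≠ 0) with hC
    have hCne : C.Nonempty := ⟨u₀, by simp [hC, hu₀s, hu₀]⟩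
    set us := C.min' hCne with hus
    have husC : us ∈ C := Finset.min'_mem _ _
    have huss : us ∈ s := (Finset.mem_filter.mp husC).1
    have husP : u₀.Perm us := (Finset.mem_filter.mp husC).2.1
    have husnz : z us ≠ 0 := (Finset.mem_filter.mp husC).2.2
    obtain ⟨a, ha, hza⟩ := hz us huss
    -- `a = -(rest)`, everything in the sup over `j ≠ us`
    have hrest : ∀ u ∈ s, u ≠ us → z u ∈ ⨆ j, ⨆ (_ : j ≠ us), Vword V j := by
      intro u hus' hne
      by_cases hz0 : z u = 0
      · rw [hz0]; exact zero_mem _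
      obtain ⟨b, hb, hzb⟩ := hz u hus'
      have hbmem : b ∈ ⨆ j, ⨆ (_ : j ≠ us), Vword V j :=
        le_iSup₂ (f := fun (j : List ι) (_ : j ≠ us) => Vword V j) u hne hb
      have hdiff : Br u b - b ∈ higher V u := hkey u b hb
      have hhigh : higher V u ≤ ⨆ j, ⨆ (_ : j ≠ us), Vword V j := by
        refine iSup_le fun wp => ?_
        have hwne : wp.1 ≠ us := by
          intro heq
          -- then u and us are anagrams and u < us, contradicting minimality
          have hperm : u₀.Perm u := by
            have h1 : u.Perm us := heq ▸ wp.2.1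
            exact husP.trans h1.symm
          have huC : u ∈ C := Finset.mem_filter.mpr ⟨hus', hperm, hz0⟩
          have := Finset.min'_le C u huC
          rw [← hus] at this
          have hlt : u < us := heq ▸ wp.2.2
          exact absurd (lt_of_le_of_lt this hlt) (lt_irrefl us)
        exact le_iSup₂ (f := fun (j : List ι) (_ : j ≠ us) => Vword V j) wp.1 hwne
      have : z u = b + (Br u b - b) := by rw [← hzb]; abel
      rw [this]
      exact add_mem hbmem (hhigh hdiff)
    have hself : z us - a ∈ ⨆ j, ⨆ (_ : j ≠ us), Vword V j := by
      have hdiff : Br us a - a ∈ higher V us := hkey us a ha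
      have hhigh : higher V us ≤ ⨆ j, ⨆ (_ : j ≠ us), Vword V j := by
        refine iSup_le fun wp => ?_
        exact le_iSup₂ (f := fun (j : List ι) (_ : j ≠ us) => Vword V j) wp.1
          (ne_of_gt wp.2.2)
      rw [← hza]
      exact hhigh hdiff
    have hsum' : a = -((z us - a) + ∑ u ∈ s.erase us, z u) := by
      have h0 : z us + ∑ u ∈ s.erase us, z u = 0 := by
        rw [Finset.add_sum_erase s z huss]; exact hsum
      have he : -((z us - a) + ∑ u ∈ s.erase us, z u)
          = a - (z us + ∑ u ∈ s.erase us, z u) := by abel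
      rw [he, h0, sub_zero]
    have hamem : a ∈ ⨆ j, ⨆ (_ : j ≠ us), Vword V j := by
      rw [hsum']
      refine neg_mem (add_mem hself (Submodule.sum_mem _ fun u hu => ?_))
      exact hrest u (Finset.mem_of_mem_erase hu) (Finset.ne_of_mem_erase hu)
    have hdisj := iSupIndep_def.mp hind us
    have ha0 : a = 0 := Submodule.disjoint_def.mp hdisj a ha hamem
    apply husnz
    rw [← hza, ha0, map_zero]
  constructor
  · -- independence
    rw [iSupIndep_def]
    intro u
    rw [Submodule.disjoint_def]
    intro x hxu hxrest
    rw [iSup_subtype'] at hxrest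
    obtain ⟨f, hf, hfs⟩ := (Submodule.mem_iSup_iff_exists_finsupp _ x).mp hxrest
    set s : Finset (List ι) := insert u (f.support.image Subtype.val) with hs
    set z : List ι → T := fun j => if h : j = u then -x else f ⟨j, h⟩ with hz
    have hzmem : ∀ j ∈ s, z j ∈ W j := by
      intro j hj
      by_cases h : j = u
      · subst h
        simp only [hz, dif_pos rfl]
        exact neg_mem hxu
      · simp only [hz, dif_neg h]
        exact hf ⟨j, h⟩
    have husupp : u ∉ f.support.image Subtype.val := by
      simp only [Finset.mem_image]
      rintro ⟨⟨j, hj⟩, -, h⟩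
      exact hj h
    have hsum : (∑ j ∈ s, z j) = 0 := by
      rw [hs, Finset.sum_insert husupp]
      have h1 : z u = -x := by simp [hz]
      have h2 : (∑ j ∈ f.support.image Subtype.val, z j) = x := by
        rw [Finset.sum_image (fun a _ b _ h => Subtype.val_injective h)]
        have : ∀ j ∈ f.support, z j.1 = f j := by
          intro j _
          simp only [hz, dif_neg j.2]
        rw [Finset.sum_congr rfl this]
        rw [← hfs]
        rfl
      rw [h1, h2]
      abel
    have := hzero s z hzmem hsum u (Finset.mem_insert_self _ _)
    have hx0 : -x = 0 := by
      rw [← this]; simp [hz]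
    simpa using hx0
  · -- spanning
    set μ : List ι → ℕ :=
      fun u => ((u.permutations.toFinset).filter (fun w => u < w)).card with hμ
    have hspan : ∀ n (u : List ι), μ u = n → Vword V u ≤ ⨆ w, W w := by
      intro n
      induction n using Nat.strong_induction_on with
      | _ n ihn =>
        intro u hμu x hx
        have hBx : Br u x ∈ ⨆ w, W w :=
          le_iSup W u ⟨x, hx, rfl⟩
        have hdiff : Br u x - x ∈ higher V u := hkey u x hx
        have hhigh : higher V u ≤ ⨆ w, W w := by
          refine iSup_le fun wp => ?_
          have hmeas : μ wp.1 < μ u := by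
            simp only [hμ]
            refine Finset.card_lt_card ?_
            rw [Finset.ssubset_def]
            constructor
            · intro a hamem
              rw [Finset.mem_filter] at hamem ⊢
              obtain ⟨ham, hlt⟩ := hamem
              rw [List.mem_toFinset, List.mem_permutations] at ham
              refine ⟨?_, lt_trans wp.2.2 hlt⟩
              rw [List.mem_toFinset, List.mem_permutations]
              exact ham.trans wp.2.1.symm
            · intro hsub
              have hwmem : wp.1 ∈ (u.permutations.toFinset).filter (fun w => u < w) := by
                rw [Finset.mem_filter, List.mem_toFinset, List.mem_permutations]
                exact ⟨wp.2.1.symm, wp.2.2⟩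
              have := hsub hwmem
              rw [Finset.mem_filter] at this
              exact absurd this.2 (lt_irrefl wp.1)
          exact ihn (μ wp.1) (by rw [← hμu]; exact hmeas) wp.1 rfl
        have : x = Br u x - (Br u x - x) := by abel
        rw [this]
        exact sub_mem hBx (hhigh hdiff)
    rw [eq_top_iff, ← hsup]
    exact iSup_le fun u => hspan (μ u) u rfl
end
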